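/- The linear program min ηᵀp subject to p ≥ DBp + z with η entrywise positive, DB entrywise nonnegative with ρ(DB) < 1, and z entrywise nonnegative, has optimal solution p* = (I-DB)⁻¹z (the constraint is active at optimum). -/

import Mathlib

open Filter Topology

attribute [local instance] Matrix.linftyOpNormedAddCommGroup Matrix.linftyOpNormedRing
  Matrix.linftyOpNormedAlgebra

private lemma stmt12_spec {N : ℕ} (A : Matrix (Fin N) (Fin N) ℝ)
    (hρ : ∀ (μ : ℂ) (v : Fin N → ℂ), v ≠ 0 →
      (A.map Complex.ofReal).mulVec v = μ • v → ‖μ‖ < 1)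
    (μ : ℂ) (hμ : μ ∈ spectrum ℂ (A.map Complex.ofReal)) : ‖μ‖ < 1 := by
  rw [spectrum.mem_iff] at hμ
  have hdet : (algebraMap ℂ (Matrix (Fin N) (Fin N) ℂ) μ - A.map Complex.ofReal).det = 0 := by
    by_contra h
    exact hμ ((Matrix.isUnit_iff_isUnit_det _).mpr (isUnit_iff_ne_zero.mpr h))
  obtain ⟨v, hv, hv0⟩ := Matrix.exists_mulVec_eq_zero_iff.mpr hdet
  refine hρ μ v hv ?_
  rw [Matrix.sub_mulVec] at hv0
  have h2 : (algebraMap ℂ (Matrix (Fin N) (Fin N) ℂ) μ).mulVec v = μ • v := by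
    rw [Algebra.algebraMap_eq_smul_one, Matrix.smul_mulVec, Matrix.one_mulVec]
  have h3 := sub_eq_zero.mp hv0
  rw [← h3, h2]

private lemma stmt12_aux {N : ℕ} (A : Matrix (Fin N) (Fin N) ℝ)
    (hApos : ∀ i j, 0 ≤ A i j)
    (hρ : ∀ (μ : ℂ) (v : Fin N → ℂ), v ≠ 0 →
      (A.map Complex.ofReal).mulVec v = μ • v → ‖μ‖ < 1)
    (w : Fin N → ℝ) (hw : ∀ i, (A.mulVec w) i ≤ w i) : ∀ i, 0 ≤ w i := by
  intro i
  haveI : Nonempty (Fin N) := ⟨i⟩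
  classical
  -- iterates stay below w
  have hiter : ∀ n : ℕ, ∀ j, ((A ^ n).mulVec w) j ≤ w j := by
    intro n
    induction n with
    | zero => intro j; simp [Matrix.one_mulVec]
    | succ n ih =>
      intro j
      have hstep : (A ^ (n + 1)).mulVec w = A.mulVec ((A ^ n).mulVec w) := by
        rw [Matrix.mulVec_mulVec, ← pow_succ']
      rw [hstep]
      calc (A.mulVec ((A ^ n).mulVec w)) j
          ≤ (A.mulVec w) j := by
            simp only [Matrix.mulVec, dotProduct]
            exact Finset.sum_le_sum fun k _ => mul_le_mul_of_nonneg_left (ih k) (hApos j k)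
        _ ≤ w j := hw j
  -- complex matrix
  set Ac : Matrix (Fin N) (Fin N) ℂ := A.map Complex.ofReal with hAc
  haveI : CompleteSpace (Matrix (Fin N) (Fin N) ℂ) := FiniteDimensional.complete ℂ _
  have hrad : spectralRadius ℂ Ac < 1 := by
    have := spectrum.spectralRadius_lt_of_forall_lt Ac (r := 1)
      (fun z hz => by
        have := stmt12_spec A hρ z hz
        rw [← NNReal.coe_lt_coe, coe_nnnorm]
        simpa using this)
    simpa using this
  obtain ⟨c, hc1, hc2⟩ := ENNReal.lt_iff_exists_nnreal_btwn.mp hrad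
  have hgel := spectrum.pow_nnnorm_pow_one_div_tendsto_nhds_spectralRadius Ac
  have hev : ∀ᶠ n : ℕ in atTop, (‖Ac ^ n‖₊ : ENNReal) ^ (1 / (n : ℝ)) < (c : ENNReal) :=
    hgel.eventually_lt_const hc1
  have hnorm : ∀ᶠ n : ℕ in atTop, ‖Ac ^ n‖ ≤ (c : ℝ) ^ n := by
    filter_upwards [hev, Filter.eventually_gt_atTop 0] with n hn hn0
    have hne : (1 / (n : ℝ)) * n = 1 := by
      field_simp
    have h1 : (‖Ac ^ n‖₊ : ENNReal) < (c : ENNReal) ^ n := by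
      calc (‖Ac ^ n‖₊ : ENNReal)
          = ((‖Ac ^ n‖₊ : ENNReal) ^ (1 / (n : ℝ))) ^ (n : ℝ) := by
            rw [← ENNReal.rpow_mul, hne, ENNReal.rpow_one]
        _ < (c : ENNReal) ^ (n : ℝ) :=
            ENNReal.rpow_lt_rpow hn (by exact_mod_cast hn0)
        _ = (c : ENNReal) ^ n := by rw [ENNReal.rpow_natCast]
    have h2 : ‖Ac ^ n‖₊ < c ^ n := by
      have := h1
      rw [← ENNReal.coe_pow, ENNReal.coe_lt_coe] at this
      exact this
    calc ‖Ac ^ n‖ = ((‖Ac ^ n‖₊ : NNReal) : ℝ) := (coe_nnnorm _).symm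
      _ ≤ ((c ^ n : NNReal) : ℝ) := by exact_mod_cast h2.le
      _ = (c : ℝ) ^ n := by push_cast; ring
  set wc : Fin N → ℂ := fun j => (w j : ℂ) with hwc
  have hb : ∀ n : ℕ, |((A ^ n).mulVec w) i| ≤ ‖Ac ^ n‖ * ‖wc‖ := by
    intro n
    have hpow : Ac ^ n = (A ^ n).map Complex.ofReal := by
      rw [hAc]
      have : A.map Complex.ofReal = Complex.ofRealHom.mapMatrix A := rfl
      rw [this, ← map_pow, RingHom.mapMatrix_apply]
      rfl
    have h1 : ((Ac ^ n).mulVec wc) i = (((A ^ n).mulVec w) i : ℂ) := by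
      rw [hpow]
      exact (RingHom.map_mulVec Complex.ofRealHom (A ^ n) w i).symm
    calc |((A ^ n).mulVec w) i| = ‖(((A ^ n).mulVec w) i : ℂ)‖ := by
          rw [Complex.norm_real, Real.norm_eq_abs]
      _ = ‖((Ac ^ n).mulVec wc) i‖ := by rw [h1]
      _ ≤ ‖(Ac ^ n).mulVec wc‖ := norm_le_pi_norm _ i
      _ ≤ ‖Ac ^ n‖ * ‖wc‖ := Matrix.linfty_opNorm_mulVec _ _
  have hcz : Tendsto (fun n : ℕ => (c : ℝ) ^ n * ‖wc‖) atTop (𝓝 0) := by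
    have h1 : Tendsto (fun n : ℕ => (c : ℝ) ^ n) atTop (𝓝 0) :=
      tendsto_pow_atTop_nhds_zero_of_lt_one c.coe_nonneg (by exact_mod_cast hc2)
    simpa using h1.mul_const ‖wc‖
  have hten : Tendsto (fun n : ℕ => ((A ^ n).mulVec w) i) atTop (𝓝 0) := by
    apply squeeze_zero_norm' _ hcz
    filter_upwards [hnorm] with n hn
    calc ‖((A ^ n).mulVec w) i‖ = |((A ^ n).mulVec w) i| := Real.norm_eq_abs _
      _ ≤ ‖Ac ^ n‖ * ‖wc‖ := hb n
      _ ≤ (c : ℝ) ^ n * ‖wc‖ := mul_le_mul_of_nonneg_right hn (norm_nonneg _)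
  exact le_of_tendsto' hten fun n => hiter n i

private lemma stmt12_inv {N : ℕ} (A : Matrix (Fin N) (Fin N) ℝ)
    (hρ : ∀ (μ : ℂ) (v : Fin N → ℂ), v ≠ 0 →
      (A.map Complex.ofReal).mulVec v = μ • v → ‖μ‖ < 1) :
    IsUnit (1 - A).det := by
  rw [isUnit_iff_ne_zero]
  intro h0
  obtain ⟨v, hv, hv0⟩ := Matrix.exists_mulVec_eq_zero_iff.mpr h0
  have hvc : (fun j => (v j : ℂ)) ≠ 0 := by
    intro h
    apply hv
    funext j
    have h2 := congrFun h j
    simp only [Pi.zero_apply] at h2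
    simp only [Pi.zero_apply]
    exact_mod_cast h2
  have heig : (A.map Complex.ofReal).mulVec (fun j => (v j : ℂ)) =
      (1 : ℂ) • (fun j => (v j : ℂ)) := by
    funext j
    have h1 : ((1 - A).mulVec v) j = 0 := congrFun hv0 j
    rw [Matrix.sub_mulVec, Matrix.one_mulVec] at h1
    have h2 : (A.mulVec v) j = v j := by
      have := h1
      simp only [Pi.sub_apply] at this
      linarith
    have h3 : ((A.map Complex.ofReal).mulVec (fun j => (v j : ℂ))) j
        = ((A.mulVec v) j : ℂ) :=
      (RingHom.map_mulVec Complex.ofRealHom A v j).symm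
    rw [h3, h2]
    simp
  have := hρ 1 _ hvc heig
  simp at this

/-- the LP min ηᵀp s.t. p ≥ DBp + z (η > 0 entrywise, DB ≥ 0
entrywise, ρ(DB) < 1, z ≥ 0) has optimal solution p* = (I-DB)⁻¹z. -/
theorem stmt_12 {N : ℕ} (η : Fin N → ℝ) (hη : ∀ i, 0 < η i)
    (D B : Matrix (Fin N) (Fin N) ℝ)
    (hDB : ∀ i j, 0 ≤ (D * B) i j)
    (hρ : ∀ (μ : ℂ) (v : Fin N → ℂ), v ≠ 0 →
      ((D * B).map (Complex.ofReal)).mulVec v = μ • v → ‖μ‖ < 1)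
    (z : Fin N → ℝ) (hz : ∀ i, 0 ≤ z i) :
    (∀ i, ((D * B).mulVec ((1 - D * B)⁻¹.mulVec z) + z) i ≤
      (1 - D * B)⁻¹.mulVec z i) ∧
    (∀ p : Fin N → ℝ, (∀ i, ((D * B).mulVec p + z) i ≤ p i) →
      ∑ i, η i * (1 - D * B)⁻¹.mulVec z i ≤ ∑ i, η i * p i) := by
  set A := D * B with hA
  have hdet : IsUnit (1 - A).det := stmt12_inv A hρ
  set pstar := (1 - A)⁻¹.mulVec z with hps
  have hfix : (1 - A).mulVec pstar = z := by
    rw [hps, Matrix.mulVec_mulVec, Matrix.mul_nonsing_inv _ hdet, Matrix.one_mulVec]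
  have heq : ∀ i, (A.mulVec pstar) i + z i = pstar i := by
    intro i
    have h1 := congrFun hfix i
    rw [Matrix.sub_mulVec, Matrix.one_mulVec] at h1
    simp only [Pi.sub_apply] at h1
    linarith
  constructor
  · intro i
    exact le_of_eq (heq i)
  · intro p hp
    have hw : ∀ i, (A.mulVec (p - pstar)) i ≤ (p - pstar) i := by
      intro i
      have h1 := hp i
      simp only [Pi.add_apply] at h1
      have h2 := heq i
      rw [Matrix.mulVec_sub]
      simp only [Pi.sub_apply]
      linarith
    have hnn := stmt12_aux A hDB hρ (p - pstar) hw
    apply Finset.sum_le_sum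
    intro i _
    have h3 := hnn i
    simp only [Pi.sub_apply] at h3
    nlinarith [hη i]
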